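/- arXiv:2505.07240 — 7 statements merged into one kernel-verified Lean document; each statement's English description precedes it below -/
import Mathlib

section
/- Let K_R = diag(k1,k2,k3) be a diagonal matrix with distinct positive entries, and let Q ∈ SO(3). Define Ψ_K(Q) = (1/2)·tr(K_R(I₃ − Q)) and e_{K,R}(Q) = (1/2)·vee(K_R Q − Qᵀ K_R). Suppose Ψ_K(Q) < ψ for some ψ with 0 < ψ < h1. Then g1·‖e_{K,R}(Q)‖² ≤ Ψ_K(Q) ≤ g2·‖e_{K,R}(Q)‖², where g1 = h1/(h2 + h3²) and g2 = h3/(h1(h1 − ψ)). -/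
open Matrix

noncomputable section

/-- The vee map: sends a skew-symmetric 3×3 matrix `S` to `(S₃₂, S₁₃, S₂₁)`. -/
def vee (S : Matrix (Fin 3) (Fin 3) ℝ) : Fin 3 → ℝ := ![S 2 1, S 0 2, S 1 0]

/-- Euclidean norm on ℝ³. -/
def euclNorm (x : Fin 3 → ℝ) : ℝ := Real.sqrt (∑ i, x i ^ 2)

/-!
Write `x₀ = (1 + tr Q)/4` and `xᵢ = (1 - tr Q + 2 Qᵢᵢ)/4`; for a rotation these are the squares
of its Euler–Rodrigues parameters, so they are nonnegative and sum to `1`, and every product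
`16 xᵢ xⱼ` is the square of an entry of `Q - Qᵀ` or `Q + Qᵀ`. With `aᵢ = tr K - kᵢ` this turns
`Ψ_K` into the convex combination `∑ aᵢ xᵢ` and `‖e_K‖²` into
`x₀ ∑ aᵢ² xᵢ + ∑_{i<j} (aᵢ - aⱼ)² xᵢ xⱼ`, and both inequalities become elementary estimates
for weights on a simplex: `h₁ ≤ aᵢ ≤ h₃`, `(aᵢ - aⱼ)² ≤ h₂`, and `Ψ_K < ψ` forces
`h₁ x₀ ≥ h₁ - ψ`.
-/

open Finset

theorem nonneg_of_add_sum_eq_one_of_mul_nonneg {ι : Type*} [Fintype ι] [DecidableEq ι]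
    {x₀ : ℝ} {x : ι → ℝ} (hsum : x₀ + ∑ i, x i = 1) (h₀ : ∀ i, 0 ≤ x₀ * x i)
    (h : ∀ i j, i ≠ j → 0 ≤ x i * x j) : 0 ≤ x₀ ∧ ∀ i, 0 ≤ x i := by
  constructor
  · have : x₀ = x₀ ^ 2 + ∑ i, x₀ * x i := by
      rw [← mul_sum, sq, ← mul_add, hsum, mul_one]
    rw [this]
    exact add_nonneg (sq_nonneg _) (sum_nonneg fun i _ => h₀ i)
  · intro i
    have : x i = x i * x₀ + (x i ^ 2 + ∑ j ∈ univ.erase i, x i * x j) := by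
      rw [sq, ← mul_sum, ← mul_add, add_sum_erase _ _ (mem_univ i), ← mul_add, hsum, mul_one]
    rw [this]
    refine add_nonneg (mul_comm x₀ (x i) ▸ h₀ i) (add_nonneg (sq_nonneg _) (sum_nonneg ?_))
    exact fun j hj => h i j (ne_of_mem_erase hj).symm

section WeightedBounds

variable {ι : Type*} [Fintype ι] {a x : ι → ℝ} {x₀ m : ℝ}

def errorSq (a : ι → ℝ) (x₀ : ℝ) (x : ι → ℝ) : ℝ :=
  x₀ * ∑ i, a i ^ 2 * x i + (∑ i, ∑ j, (a i - a j) ^ 2 * x i * x j) / 2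

theorem sum_sum_sub_sq_mul_nonneg (hx : ∀ i, 0 ≤ x i) :
    0 ≤ ∑ i, ∑ j, (a i - a j) ^ 2 * x i * x j :=
  sum_nonneg fun i _ => sum_nonneg fun j _ => mul_nonneg (mul_nonneg (sq_nonneg _) (hx i)) (hx j)

theorem errorSq_nonneg (hx₀ : 0 ≤ x₀) (hx : ∀ i, 0 ≤ x i) : 0 ≤ errorSq a x₀ x :=
  add_nonneg (mul_nonneg hx₀ (sum_nonneg fun i _ => mul_nonneg (sq_nonneg (a i)) (hx i)))
    (div_nonneg (sum_sum_sub_sq_mul_nonneg hx) two_pos.le)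

theorem mul_sum_le_sum_mul_of_le (hx : ∀ i, 0 ≤ x i) (hm : ∀ i, m ≤ a i) :
    m * ∑ i, x i ≤ ∑ i, a i * x i := by
  rw [mul_sum]
  exact sum_le_sum fun i _ => mul_le_mul_of_nonneg_right (hm i) (hx i)

theorem mul_sum_sq_mul_le (hx : ∀ i, 0 ≤ x i) {M : ℝ} (hm : 0 ≤ m) (hma : ∀ i, m ≤ a i)
    (haM : ∀ i, a i ≤ M) : m * ∑ i, a i ^ 2 * x i ≤ M ^ 2 * ∑ i, a i * x i := by
  rw [mul_sum, mul_sum]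
  refine sum_le_sum fun i _ => ?_
  have ha : 0 ≤ a i := hm.trans (hma i)
  have key : m * a i ^ 2 ≤ M ^ 2 * a i := calc
    m * a i ^ 2 ≤ M * (a i * a i) := by
      rw [sq]; exact mul_le_mul_of_nonneg_right ((hma i).trans (haM i)) (mul_nonneg ha ha)
    _ ≤ M * (M * a i) := by
      gcongr
      · exact ha.trans (haM i)
      · exact haM i
    _ = M ^ 2 * a i := by ring
  linear_combination mul_le_mul_of_nonneg_right key (hx i)

theorem sum_sum_sub_sq_mul_le (hx : ∀ i, 0 ≤ x i) {D : ℝ} (haD : ∀ i j, (a i - a j) ^ 2 ≤ D) :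
    ∑ i, ∑ j, (a i - a j) ^ 2 * x i * x j ≤ D * (∑ i, x i) ^ 2 := by
  rw [sq, sum_mul_sum, mul_sum]
  refine sum_le_sum fun i _ => ?_
  rw [mul_sum]
  exact sum_le_sum fun j _ => by
    linear_combination mul_le_mul_of_nonneg_right (haD i j) (mul_nonneg (hx i) (hx j))

theorem mul_errorSq_le (hx₀ : 0 ≤ x₀) (hx : ∀ i, 0 ≤ x i) (hsum : x₀ + ∑ i, x i = 1)
    {M D : ℝ} (hm : 0 ≤ m) (hma : ∀ i, m ≤ a i) (haM : ∀ i, a i ≤ M) (hD : 0 ≤ D)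
    (haD : ∀ i j, (a i - a j) ^ 2 ≤ D) :
    m * errorSq a x₀ x ≤ (D + M ^ 2) * ∑ i, a i * x i := by
  set Ψ := ∑ i, a i * x i
  set S := ∑ i, a i ^ 2 * x i
  set P := ∑ i, ∑ j, (a i - a j) ^ 2 * x i * x j
  have hs₀ : 0 ≤ ∑ i, x i := sum_nonneg fun i _ => hx i
  have hmΨ : m * ∑ i, x i ≤ Ψ := mul_sum_le_sum_mul_of_le hx hma
  have hΨ₀ : 0 ≤ Ψ := (mul_nonneg hm hs₀).trans hmΨ
  have hdiag : m * (x₀ * S) ≤ M ^ 2 * Ψ := calc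
    m * (x₀ * S) = x₀ * (m * S) := by ring
    _ ≤ 1 * (m * S) := by
      gcongr
      · exact mul_nonneg hm (sum_nonneg fun i _ => mul_nonneg (sq_nonneg (a i)) (hx i))
      · linarith
    _ ≤ M ^ 2 * Ψ := by rw [one_mul]; exact mul_sum_sq_mul_le hx hm hma haM
  have hoff : m * (P / 2) ≤ D * Ψ := calc
    m * (P / 2) ≤ m * (D * (∑ i, x i) ^ 2) := by
      gcongr; linarith [sum_sum_sub_sq_mul_nonneg (a := a) hx, sum_sum_sub_sq_mul_le hx haD]
    _ = D * (m * (∑ i, x i) * ∑ i, x i) := by ring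
    _ ≤ D * (Ψ * 1) := by gcongr; linarith
    _ = D * Ψ := by rw [mul_one]
  rw [errorSq, mul_add]
  linarith

theorem sub_mul_le_errorSq (hx₀ : 0 ≤ x₀) (hx : ∀ i, 0 ≤ x i) (hsum : x₀ + ∑ i, x i = 1)
    {ψ : ℝ} (hm : 0 ≤ m) (hma : ∀ i, m ≤ a i) (hΨ : ∑ i, a i * x i ≤ ψ) :
    (m - ψ) * ∑ i, a i * x i ≤ errorSq a x₀ x := by
  have hmΨ : m * ∑ i, x i ≤ ∑ i, a i * x i := mul_sum_le_sum_mul_of_le hx hma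
  have hΨ₀ : 0 ≤ ∑ i, a i * x i := (mul_nonneg hm (sum_nonneg fun i _ => hx i)).trans hmΨ
  have hsq : m * ∑ i, a i * x i ≤ ∑ i, a i ^ 2 * x i := by
    rw [mul_sum]
    refine sum_le_sum fun i _ => ?_
    linear_combination mul_le_mul_of_nonneg_right
      (mul_le_mul_of_nonneg_right (hma i) (hm.trans (hma i))) (hx i)
  have hmx₀ : m - ψ ≤ m * x₀ := by linear_combination hΨ + hmΨ - m * hsum
  calc (m - ψ) * ∑ i, a i * x i ≤ (m * x₀) * ∑ i, a i * x i := by gcongr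
    _ = x₀ * (m * ∑ i, a i * x i) := by ring
    _ ≤ x₀ * ∑ i, a i ^ 2 * x i := by gcongr
    _ ≤ errorSq a x₀ x :=
      le_add_of_nonneg_right (div_nonneg (sum_sum_sub_sq_mul_nonneg hx) two_pos.le)

end WeightedBounds

section Orthogonal

variable {n : Type*} [Fintype n] [DecidableEq n] {Q : Matrix n n ℝ}

theorem sum_sq_col_eq_one (hQ : Qᵀ * Q = 1) (j : n) : ∑ i, Q i j ^ 2 = 1 := by
  simpa [sq, mul_apply] using congrFun₂ hQ j j

theorem sum_sq_row_eq_one (hQ : Qᵀ * Q = 1) (i : n) : ∑ j, Q i j ^ 2 = 1 := by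
  simpa [sq, mul_apply] using congrFun₂ (mul_eq_one_comm.mp hQ : Q * Qᵀ = 1) i i

end Orthogonal

section Rotation

variable {Q : Matrix (Fin 3) (Fin 3) ℝ}

theorem diag_eq_minor (hQ : Qᵀ * Q = 1) (hdet : Q.det = 1) :
    Q 0 0 = Q 1 1 * Q 2 2 - Q 1 2 * Q 2 1 ∧ Q 1 1 = Q 0 0 * Q 2 2 - Q 0 2 * Q 2 0 ∧
      Q 2 2 = Q 0 0 * Q 1 1 - Q 0 1 * Q 1 0 := by
  have hadj : Q.adjugate = Qᵀ := by
    rw [← one_mul Q.adjugate, ← hQ, mul_assoc, mul_adjugate, hdet, one_smul, mul_one]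
  have h := adjugate_fin_three Q
  rw [hadj] at h
  exact ⟨by simpa using congrFun₂ h 0 0, by simpa using congrFun₂ h 1 1,
    by simpa using congrFun₂ h 2 2⟩

def eulerParamSq0 (Q : Matrix (Fin 3) (Fin 3) ℝ) : ℝ := (1 + Q.trace) / 4

def eulerParamSq (Q : Matrix (Fin 3) (Fin 3) ℝ) (i : Fin 3) : ℝ := (1 - Q.trace + 2 * Q i i) / 4

theorem eulerParamSq0_add_sum_eulerParamSq (Q : Matrix (Fin 3) (Fin 3) ℝ) :
    eulerParamSq0 Q + ∑ i, eulerParamSq Q i = 1 := by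
  simp only [eulerParamSq0, eulerParamSq, Fin.sum_univ_three, trace_fin_three]
  ring

theorem sixteen_mul_eulerParamSq0_mul (hQ : Qᵀ * Q = 1) (hdet : Q.det = 1) (i : Fin 3) :
    16 * (eulerParamSq0 Q * eulerParamSq Q i) = vee (Q - Qᵀ) i ^ 2 := by
  have c := sum_sq_col_eq_one hQ
  have r := sum_sq_row_eq_one hQ
  obtain ⟨m₀, m₁, m₂⟩ := diag_eq_minor hQ hdet
  simp only [Fin.sum_univ_three] at c r
  fin_cases i <;> simp only [eulerParamSq0, eulerParamSq, vee, trace_fin_three, Matrix.sub_apply,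
    transpose_apply, Fin.isValue, Fin.zero_eta, Fin.mk_one, Fin.reduceFinMk, cons_val_zero,
    cons_val_one, Matrix.cons_val]
  · linear_combination r 0 - c 1 - c 2 + 2 * m₀
  · linear_combination - c 0 + r 1 - c 2 + 2 * m₁
  · linear_combination - r 0 - r 1 + c 2 + 2 * m₂

theorem sixteen_mul_eulerParamSq_mul (hQ : Qᵀ * Q = 1) (hdet : Q.det = 1) {i j : Fin 3}
    (hij : i ≠ j) : 16 * (eulerParamSq Q i * eulerParamSq Q j) = (Q i j + Q j i) ^ 2 := by
  have c := sum_sq_col_eq_one hQ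
  have r := sum_sq_row_eq_one hQ
  obtain ⟨m₀, m₁, m₂⟩ := diag_eq_minor hQ hdet
  simp only [Fin.sum_univ_three] at c r
  fin_cases i <;> fin_cases j <;> (try exact absurd rfl hij) <;>
    simp only [eulerParamSq, trace_fin_three, Fin.isValue, Fin.zero_eta, Fin.mk_one, Fin.reduceFinMk]
  · linear_combination - r 0 - r 1 + c 2 - 2 * m₂
  · linear_combination - c 0 + r 1 - c 2 - 2 * m₁
  · linear_combination - r 0 - r 1 + c 2 - 2 * m₂
  · linear_combination r 0 - c 1 - c 2 - 2 * m₀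
  · linear_combination - c 0 + r 1 - c 2 - 2 * m₁
  · linear_combination r 0 - c 1 - c 2 - 2 * m₀

theorem eulerParamSq_nonneg (hQ : Qᵀ * Q = 1) (hdet : Q.det = 1) :
    0 ≤ eulerParamSq0 Q ∧ ∀ i, 0 ≤ eulerParamSq Q i :=
  nonneg_of_add_sum_eq_one_of_mul_nonneg (eulerParamSq0_add_sum_eulerParamSq Q)
    (fun i => by linarith [sixteen_mul_eulerParamSq0_mul hQ hdet i, sq_nonneg (vee (Q - Qᵀ) i)])
    (fun i j hij => by
      linarith [sixteen_mul_eulerParamSq_mul hQ hdet hij, sq_nonneg (Q i j + Q j i)])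

end Rotation

def traceComplement (k : Fin 3 → ℝ) (i : Fin 3) : ℝ := ∑ j, k j - k i

theorem traceComplement_sub (k : Fin 3 → ℝ) (i j : Fin 3) :
    traceComplement k i - traceComplement k j = k j - k i := by
  simp only [traceComplement]; ring

theorem traceComplement_vecCons (k1 k2 k3 : ℝ) :
    traceComplement ![k1, k2, k3] = ![k2 + k3, k1 + k3, k1 + k2] := by
  ext i
  fin_cases i <;> simp only [traceComplement, Fin.sum_univ_three, Fin.isValue, Fin.zero_eta,
    Fin.mk_one, Fin.reduceFinMk, cons_val_zero, cons_val_one, Matrix.cons_val] <;> ring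

theorem min_le_traceComplement (k1 k2 k3 : ℝ) (i : Fin 3) :
    min (k1 + k2) (min (k1 + k3) (k2 + k3)) ≤ traceComplement ![k1, k2, k3] i := by
  fin_cases i <;> simp [traceComplement_vecCons]

theorem traceComplement_le_max (k1 k2 k3 : ℝ) (i : Fin 3) :
    traceComplement ![k1, k2, k3] i ≤ max (k1 + k2) (max (k1 + k3) (k2 + k3)) := by
  fin_cases i <;> simp [traceComplement_vecCons]

theorem sub_traceComplement_sq_le_max (k1 k2 k3 : ℝ) (i j : Fin 3) :
    (traceComplement ![k1, k2, k3] i - traceComplement ![k1, k2, k3] j) ^ 2 ≤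
      max ((k1 - k2) ^ 2) (max ((k1 - k3) ^ 2) ((k2 - k3) ^ 2)) := by
  rw [traceComplement_sub]
  fin_cases i <;> fin_cases j <;> simp [sub_sq_comm, sq_nonneg]

theorem half_trace_diagonal_mul_one_sub (k : Fin 3 → ℝ) (Q : Matrix (Fin 3) (Fin 3) ℝ) :
    1 / 2 * (diagonal k * (1 - Q)).trace = ∑ i, traceComplement k i * eulerParamSq Q i := by
  simp only [traceComplement, eulerParamSq, trace_fin_three, Fin.sum_univ_three, diagonal_mul,
    Matrix.sub_apply, one_apply_eq]
  ring

theorem euclNorm_half_vee_sq (k : Fin 3 → ℝ) {Q : Matrix (Fin 3) (Fin 3) ℝ} (hQ : Qᵀ * Q = 1)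
    (hdet : Q.det = 1) :
    euclNorm ((1 / 2 : ℝ) • vee (diagonal k * Q - Qᵀ * diagonal k)) ^ 2 =
      errorSq (traceComplement k) (eulerParamSq0 Q) (eulerParamSq Q) := by
  have c := sum_sq_col_eq_one hQ
  have r := sum_sq_row_eq_one hQ
  simp only [Fin.sum_univ_three] at c r
  have p₀ := sixteen_mul_eulerParamSq0_mul hQ hdet 0
  have p₁ := sixteen_mul_eulerParamSq0_mul hQ hdet 1
  have p₂ := sixteen_mul_eulerParamSq0_mul hQ hdet 2
  have p₀₁ := sixteen_mul_eulerParamSq_mul hQ hdet (i := 0) (j := 1) (by decide)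
  have p₀₂ := sixteen_mul_eulerParamSq_mul hQ hdet (i := 0) (j := 2) (by decide)
  have p₁₂ := sixteen_mul_eulerParamSq_mul hQ hdet (i := 1) (j := 2) (by decide)
  simp only [vee, Matrix.sub_apply, transpose_apply, Matrix.cons_val] at p₀ p₁ p₂
  rw [euclNorm, Real.sq_sqrt (sum_nonneg fun i _ => sq_nonneg _)]
  simp only [errorSq, traceComplement, vee, Fin.sum_univ_three, Pi.smul_apply, smul_eq_mul,
    Matrix.sub_apply, diagonal_mul, mul_diagonal, transpose_apply, cons_val_zero, cons_val_one,
    Matrix.cons_val]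
  -- the cross terms cancel: rows and columns of `Q` are unit vectors, which makes
  -- `Q₂₁² - Q₁₂² = Q₀₂² - Q₂₀² = Q₁₀² - Q₀₁²`
  linear_combination (-(k 1 + k 2) ^ 2 / 16) * p₀ + (-(k 0 + k 2) ^ 2 / 16) * p₁
    + (-(k 0 + k 1) ^ 2 / 16) * p₂
    + (-(k 2 - k 1) ^ 2 / 16) * p₁₂ + (-(k 0 - k 2) ^ 2 / 16) * p₀₂ + (-(k 1 - k 0) ^ 2 / 16) * p₀₁
    + k 0 ^ 2 / 8 * (r 0 - c 0) + k 1 ^ 2 / 8 * (r 1 - c 1) + k 2 ^ 2 / 8 * (r 2 - c 2)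

theorem stmt0_general (k1 k2 k3 ψ : ℝ)
    (KR : Matrix (Fin 3) (Fin 3) ℝ) (hKR : KR = Matrix.diagonal ![k1, k2, k3])
    (Q : Matrix (Fin 3) (Fin 3) ℝ) (hQ : Qᵀ * Q = 1) (hQdet : Q.det = 1)
    (h1 h2 h3 g1 g2 ΨK : ℝ) (eKR : Fin 3 → ℝ)
    (hh1 : h1 = min (k1 + k2) (min (k1 + k3) (k2 + k3)))
    (hh2 : h2 = max ((k1 - k2) ^ 2) (max ((k1 - k3) ^ 2) ((k2 - k3) ^ 2)))
    (hh3 : h3 = max (k1 + k2) (max (k1 + k3) (k2 + k3)))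
    (hg1 : g1 = h1 / (h2 + h3 ^ 2))
    (hg2 : g2 = h3 / (h1 * (h1 - ψ)))
    (hΨK : ΨK = (1 / 2) * (KR * (1 - Q)).trace)
    (heKR : eKR = (1 / 2 : ℝ) • vee (KR * Q - Qᵀ * KR))
    (hψpos : 0 < ψ) (hψlt : ψ < h1) (hΨ : ΨK < ψ) :
    g1 * euclNorm eKR ^ 2 ≤ ΨK ∧ ΨK ≤ g2 * euclNorm eKR ^ 2 := by
  subst hKR hΨK heKR hg1 hg2
  rw [half_trace_diagonal_mul_one_sub] at hΨ ⊢
  rw [euclNorm_half_vee_sq _ hQ hQdet]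
  obtain ⟨hx₀, hx⟩ := eulerParamSq_nonneg hQ hQdet
  have hsum := eulerParamSq0_add_sum_eulerParamSq Q
  have hlo : ∀ i, h1 ≤ traceComplement ![k1, k2, k3] i := hh1 ▸ min_le_traceComplement k1 k2 k3
  have hhi : ∀ i, traceComplement ![k1, k2, k3] i ≤ h3 := hh3 ▸ traceComplement_le_max k1 k2 k3
  have hdiff := hh2 ▸ sub_traceComplement_sq_le_max k1 k2 k3
  have hh1₀ : 0 < h1 := hψpos.trans hψlt
  have hh2₀ : 0 ≤ h2 := hh2 ▸ le_max_of_le_left (sq_nonneg _)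
  have hh13 : h1 ≤ h3 := (hlo 0).trans (hhi 0)
  constructor
  · rw [div_mul_eq_mul_div,
      div_le_iff₀ (add_pos_of_nonneg_of_pos hh2₀ (pow_pos (hh1₀.trans_le hh13) 2))]
    linarith [mul_errorSq_le hx₀ hx hsum hh1₀.le hlo hhi hh2₀ hdiff]
  · rw [div_mul_eq_mul_div, le_div_iff₀ (mul_pos hh1₀ (sub_pos.2 hψlt))]
    calc _ = h1 * ((h1 - ψ) * ∑ i, traceComplement ![k1, k2, k3] i * eulerParamSq Q i) := by ring
      _ ≤ h1 * errorSq (traceComplement ![k1, k2, k3]) (eulerParamSq0 Q) (eulerParamSq Q) := by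
        gcongr; exact sub_mul_le_errorSq hx₀ hx hsum hh1₀.le hlo hΨ.le
      _ ≤ h3 * _ := by gcongr; exact errorSq_nonneg hx₀ hx

theorem stmt0 (k1 k2 k3 ψ : ℝ)
    (hk1 : 0 < k1) (hk2 : 0 < k2) (hk3 : 0 < k3)
    (hd12 : k1 ≠ k2) (hd13 : k1 ≠ k3) (hd23 : k2 ≠ k3)
    (KR : Matrix (Fin 3) (Fin 3) ℝ) (hKR : KR = Matrix.diagonal ![k1, k2, k3])
    (Q : Matrix (Fin 3) (Fin 3) ℝ) (hQ : Qᵀ * Q = 1) (hQdet : Q.det = 1)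
    (h1 h2 h3 g1 g2 ΨK : ℝ) (eKR : Fin 3 → ℝ)
    (hh1 : h1 = min (k1 + k2) (min (k1 + k3) (k2 + k3)))
    (hh2 : h2 = max ((k1 - k2) ^ 2) (max ((k1 - k3) ^ 2) ((k2 - k3) ^ 2)))
    (hh3 : h3 = max (k1 + k2) (max (k1 + k3) (k2 + k3)))
    (hg1 : g1 = h1 / (h2 + h3 ^ 2))
    (hg2 : g2 = h3 / (h1 * (h1 - ψ)))
    (hΨK : ΨK = (1 / 2) * (KR * (1 - Q)).trace)
    (heKR : eKR = (1 / 2 : ℝ) • vee (KR * Q - Qᵀ * KR))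
    (hψpos : 0 < ψ) (hψlt : ψ < h1) (hΨ : ΨK < ψ) :
    g1 * euclNorm eKR ^ 2 ≤ ΨK ∧ ΨK ≤ g2 * euclNorm eKR ^ 2 :=
  stmt0_general k1 k2 k3 ψ KR hKR Q hQ hQdet h1 h2 h3 g1 g2 ΨK eKR hh1 hh2 hh3 hg1 hg2 hΨK heKR
    hψpos hψlt hΨ
end
end

section
/- Let K_R = diag(k1,k2,k3) be a diagonal 3×3 matrix with positive entries and let G ∈ SO(3). Define C = (1/2)(tr(K_R G)·I₃ − K_R G). Then the Frobenius norm of C satisfies ‖C‖_F ≤ (1/√2)·tr(K_R). -/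
/-!
Write `M = K_R G` and `t = tr M`. Expanding, `‖t I₃ - M‖_F² = 3t² - 2t² + ‖M‖_F² = t² + ‖K_R‖_F²`,
since right multiplication by an orthogonal matrix preserves the Frobenius norm. The entries of an
orthogonal matrix lie in `[-1, 1]`, so `|t| ≤ ∑ kᵢ`, and `‖K_R‖_F² = ∑ kᵢ² ≤ (∑ kᵢ)²`. Hence
`‖C‖_F² ≤ (1/4) · 2 (∑ kᵢ)²`.
-/

open Matrix

noncomputable section

/-- Frobenius norm of a real square matrix: `√(tr(AᵀA))`. -/
def frobeniusNorm (A : Matrix (Fin 3) (Fin 3) ℝ) : ℝ := Real.sqrt ((Aᵀ * A).trace)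

namespace Matrix

variable {n : Type*} [Fintype n] [DecidableEq n]

theorem trace_transpose_mul_self_smul_one_sub (c : ℝ) (M : Matrix n n ℝ) :
    ((c • 1 - M)ᵀ * (c • 1 - M)).trace
      = Fintype.card n * c ^ 2 - 2 * c * M.trace + (Mᵀ * M).trace := by
  simp only [transpose_sub, transpose_smul, transpose_one, sub_mul, mul_sub, smul_mul_smul_comm,
    one_mul, mul_one, Matrix.smul_mul, Matrix.mul_smul, trace_sub, trace_smul, trace_one,
    trace_transpose, smul_eq_mul]
  ring

theorem trace_transpose_mul_self_mul_of_mem_orthogonalGroup (A : Matrix n n ℝ)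
    {G : Matrix n n ℝ} (hG : G ∈ orthogonalGroup n ℝ) :
    ((A * G)ᵀ * (A * G)).trace = (Aᵀ * A).trace := by
  rw [transpose_mul, Matrix.mul_assoc, trace_mul_comm, Matrix.mul_assoc, Matrix.mul_assoc,
    (mem_orthogonalGroup_iff n ℝ).mp hG, Matrix.mul_one]

theorem trace_diagonal_mul (d : n → ℝ) (M : Matrix n n ℝ) :
    (diagonal d * M).trace = ∑ i, d i * M i i := by
  simp [trace, diagonal_mul]

theorem abs_trace_diagonal_mul_le {d : n → ℝ} (hd : 0 ≤ d) {G : Matrix n n ℝ}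
    (hG : G ∈ orthogonalGroup n ℝ) : |(diagonal d * G).trace| ≤ ∑ i, d i := by
  rw [trace_diagonal_mul]
  refine (Finset.abs_sum_le_sum_abs _ _).trans (Finset.sum_le_sum fun i _ => ?_)
  have hGii : |G i i| ≤ 1 := by
    simpa only [Real.norm_eq_abs] using entry_norm_bound_of_unitary hG i i
  rw [abs_mul, abs_of_nonneg (hd i)]
  exact mul_le_of_le_one_right (hd i) hGii

theorem trace_transpose_mul_self_diagonal (d : n → ℝ) :
    ((diagonal d)ᵀ * diagonal d).trace = ∑ i, d i ^ 2 := by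
  simp [sq]

theorem trace_transpose_mul_self_trace_smul_one_sub_diagonal_mul_le
    (hn : 2 ≤ Fintype.card n) {d : n → ℝ} (hd : 0 ≤ d) {G : Matrix n n ℝ}
    (hG : G ∈ orthogonalGroup n ℝ) :
    (((diagonal d * G).trace • 1 - diagonal d * G)ᵀ *
        ((diagonal d * G).trace • 1 - diagonal d * G)).trace ≤
      (Fintype.card n - 1) * (∑ i, d i) ^ 2 := by
  have htrace : (diagonal d * G).trace ^ 2 ≤ (∑ i, d i) ^ 2 :=
    sq_le_sq' (abs_le.mp (abs_trace_diagonal_mul_le hd hG)).1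
      (abs_le.mp (abs_trace_diagonal_mul_le hd hG)).2
  have hsq : ∑ i, d i ^ 2 ≤ (∑ i, d i) ^ 2 :=
    Finset.sum_sq_le_sq_sum_of_nonneg fun i _ => hd i
  have hn' : (2 : ℝ) ≤ Fintype.card n := by exact_mod_cast hn
  rw [trace_transpose_mul_self_smul_one_sub,
    trace_transpose_mul_self_mul_of_mem_orthogonalGroup _ hG, trace_transpose_mul_self_diagonal]
  nlinarith

end Matrix

theorem stmt1_general (k1 k2 k3 : ℝ)
    (hk1 : 0 < k1) (hk2 : 0 < k2) (hk3 : 0 < k3)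
    (KR : Matrix (Fin 3) (Fin 3) ℝ) (hKR : KR = Matrix.diagonal ![k1, k2, k3])
    (G : Matrix (Fin 3) (Fin 3) ℝ) (hG : Gᵀ * G = 1)
    (C : Matrix (Fin 3) (Fin 3) ℝ)
    (hC : C = (1 / 2 : ℝ) • ((KR * G).trace • (1 : Matrix (Fin 3) (Fin 3) ℝ) - KR * G)) :
    frobeniusNorm C ≤ (1 / Real.sqrt 2) * KR.trace := by
  subst hKR hC
  have hd : 0 ≤ ![k1, k2, k3] := by
    intro i; fin_cases i <;> simp [hk1.le, hk2.le, hk3.le]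
  have hbound := trace_transpose_mul_self_trace_smul_one_sub_diagonal_mul_le (by simp) hd
    ((mem_orthogonalGroup_iff' _ ℝ).mpr hG)
  rw [frobeniusNorm, transpose_smul, smul_mul_smul_comm, trace_smul, trace_diagonal,
    Real.sqrt_le_iff]
  refine ⟨mul_nonneg (by positivity) (Finset.sum_nonneg fun i _ => hd i), ?_⟩
  rw [mul_pow, div_pow, Real.sq_sqrt zero_le_two]
  norm_num at hbound ⊢
  linarith

theorem stmt1 (k1 k2 k3 : ℝ)
    (hk1 : 0 < k1) (hk2 : 0 < k2) (hk3 : 0 < k3)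
    (KR : Matrix (Fin 3) (Fin 3) ℝ) (hKR : KR = Matrix.diagonal ![k1, k2, k3])
    (G : Matrix (Fin 3) (Fin 3) ℝ) (hG : Gᵀ * G = 1) (hGdet : G.det = 1)
    (C : Matrix (Fin 3) (Fin 3) ℝ)
    (hC : C = (1 / 2 : ℝ) • ((KR * G).trace • (1 : Matrix (Fin 3) (Fin 3) ℝ) - KR * G)) :
    frobeniusNorm C ≤ (1 / Real.sqrt 2) * KR.trace :=
  stmt1_general k1 k2 k3 hk1 hk2 hk3 KR hKR G hG C hC
end
end

section
/- Let K_R = diag(k1,k2,k3) be a diagonal matrix with distinct positive entries, let R, R_d ∈ SO(3), set Q = R_dᵀ R, b₃ = R e₃ and b₃,d = R_d e₃ (where e₃ = (0,0,1)). Define Ψ_K(Q) = (1/2)·tr(K_R(I₃ − Q)) and e_{K,R}(Q) = (1/2)·vee(K_R Q − Qᵀ K_R). If Ψ_K(Q) < ψ for some ψ with 0 < ψ < h1, then ‖b₃,d − (b₃,dᵀ b₃)·b₃‖ ≤ √(4·g2/h1)·‖e_{K,R}(Q)‖, where g2 = h3/(h1(h1 − ψ)). -/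
open Matrix

noncomputable section

/-!
Let `Q = R_dᵀ R`, of rotation angle `θ`, and put `U = 3 - tr Q = 2 (1 - cos θ)`,
`W = 1 + tr Q = 2 (1 + cos θ)`, `d = vee (Q - Qᵀ)`, so that `‖d‖² = U W`.
The left-hand side is `√(1 - Q₃₃²) ≤ √U`.
Since `2 tr (K (I - Q)) = ∑ᵢ (tr K - kᵢ) (1 + 2 Qᵢᵢ - tr Q)` with nonnegative second factors,
`h1 U ≤ 4 Ψ_K < 4 ψ`, hence `h1 W > 4 (h1 - ψ)`: a rotation with small `Ψ_K` is far from a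
half-turn. On the other hand `2 W vee (K Q - Qᵀ K) = W (tr K - K) d + d ×₃ K d` with orthogonal
summands, so `‖vee (K Q - Qᵀ K)‖² ≥ h1² U W / 4 ≥ h1 (h1 - ψ) U`.
-/

theorem euclNorm_eq_sqrt_dotProduct (x : Fin 3 → ℝ) : euclNorm x = √(x ⬝ᵥ x) := by
  simp [euclNorm, dotProduct, sq]

theorem dotProduct_self_sub_dotProduct_smul {ι R : Type*} [Fintype ι] [CommRing R]
    {u v : ι → R} (hv : v ⬝ᵥ v = 1) :
    (u - (u ⬝ᵥ v) • v) ⬝ᵥ (u - (u ⬝ᵥ v) • v) = u ⬝ᵥ u - (u ⬝ᵥ v) ^ 2 := by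
  simp only [sub_dotProduct, dotProduct_sub, smul_dotProduct, dotProduct_smul, hv,
    dotProduct_comm v u, smul_eq_mul]
  ring

theorem mulVec_dotProduct_mulVec {m n R : Type*} [Fintype m] [Fintype n] [CommRing R]
    (A B : Matrix m n R) (x y : n → R) : (A *ᵥ x) ⬝ᵥ (B *ᵥ y) = x ⬝ᵥ (Aᵀ * B) *ᵥ y := by
  rw [← mulVec_mulVec, dotProduct_transpose_mulVec, dotProduct_comm]

theorem mulVec_single_dotProduct_mulVec_single {m n R : Type*} [Fintype m] [Fintype n]
    [DecidableEq n] [CommRing R] (A B : Matrix m n R) (j : n) :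
    (A *ᵥ Pi.single j 1) ⬝ᵥ (B *ᵥ Pi.single j 1) = (Aᵀ * B) j j := by
  rw [mulVec_dotProduct_mulVec]
  simp

theorem euclNorm_sub_dotProduct_smul_mulVec_single {A B : Matrix (Fin 3) (Fin 3) ℝ}
    (hA : Aᵀ * A = 1) (hB : Bᵀ * B = 1) (j : Fin 3) :
    euclNorm (B *ᵥ Pi.single j 1 - ((B *ᵥ Pi.single j 1) ⬝ᵥ (A *ᵥ Pi.single j 1)) •
      (A *ᵥ Pi.single j 1)) = √(1 - (Bᵀ * A) j j ^ 2) := by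
  rw [euclNorm_eq_sqrt_dotProduct, dotProduct_self_sub_dotProduct_smul
    (by rw [mulVec_single_dotProduct_mulVec_single, hA, one_apply_eq]),
    mulVec_single_dotProduct_mulVec_single, mulVec_single_dotProduct_mulVec_single, hB,
    one_apply_eq]

theorem sq_mul_dotProduct_self_le_diagonal_mulVec {ι : Type*} [Fintype ι] [DecidableEq ι]
    {w d : ι → ℝ} {h : ℝ} (hh : 0 ≤ h) (hw : ∀ i, h ≤ w i) :
    h ^ 2 * (d ⬝ᵥ d) ≤ (diagonal w *ᵥ d) ⬝ᵥ (diagonal w *ᵥ d) := by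
  simp only [dotProduct, mulVec_diagonal, Finset.mul_sum]
  refine Finset.sum_le_sum fun i _ => ?_
  nlinarith [pow_le_pow_left₀ hh (hw i) 2, mul_self_nonneg (d i)]

theorem apply_le_one_of_mem_orthogonalGroup {n : Type*} [Fintype n] [DecidableEq n]
    {A : Matrix n n ℝ} (hA : A ∈ orthogonalGroup n ℝ) (i j : n) : A i j ≤ 1 := by
  have hrow : ∑ k, A i k ^ 2 = 1 := by
    simpa [mul_apply, sq] using congrFun₂ ((mem_orthogonalGroup_iff _ _).mp hA) i i
  have hsq : A i j ^ 2 ≤ 1 :=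
    hrow ▸ Finset.single_le_sum (f := fun k => A i k ^ 2) (fun k _ => sq_nonneg _)
      (Finset.mem_univ j)
  nlinarith

theorem trace_le_card_of_mem_orthogonalGroup {n : Type*} [Fintype n] [DecidableEq n]
    {A : Matrix n n ℝ} (hA : A ∈ orthogonalGroup n ℝ) : A.trace ≤ Fintype.card n := by
  calc A.trace = ∑ i, A i i := rfl
    _ ≤ ∑ _i : n, (1 : ℝ) :=
      Finset.sum_le_sum fun i _ => apply_le_one_of_mem_orthogonalGroup hA i i
    _ = Fintype.card n := by simp

theorem transpose_mul_mem_specialOrthogonalGroup {n : Type*} [Fintype n] [DecidableEq n]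
    {A B : Matrix n n ℝ} (hA : A ∈ specialOrthogonalGroup n ℝ)
    (hB : B ∈ specialOrthogonalGroup n ℝ) : Aᵀ * B ∈ specialOrthogonalGroup n ℝ := by
  obtain ⟨hAo, hAdet⟩ := mem_specialOrthogonalGroup_iff.mp hA
  obtain ⟨hBo, hBdet⟩ := mem_specialOrthogonalGroup_iff.mp hB
  refine mem_specialOrthogonalGroup_iff.mpr ⟨(mem_orthogonalGroup_iff' _ _).mpr ?_, ?_⟩
  · rw [transpose_mul, transpose_transpose, Matrix.mul_assoc, ← Matrix.mul_assoc A,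
      (mem_orthogonalGroup_iff _ _).mp hAo, Matrix.one_mul,
      (mem_orthogonalGroup_iff' _ _).mp hBo]
  · rw [det_mul, det_transpose, hAdet, hBdet, one_mul]

theorem orthogonal_and_adjugate_eq_transpose_of_mem_specialOrthogonalGroup {n : Type*}
    [Fintype n] [DecidableEq n] {A : Matrix n n ℝ} (hA : A ∈ specialOrthogonalGroup n ℝ) :
    Aᵀ * A = 1 ∧ A * Aᵀ = 1 ∧ A.adjugate = Aᵀ := by
  obtain ⟨hAo, hdet⟩ := mem_specialOrthogonalGroup_iff.mp hA
  have hAA := (mem_orthogonalGroup_iff' _ _).mp hAo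
  refine ⟨hAA, (mem_orthogonalGroup_iff _ _).mp hAo, ?_⟩
  rw [← inv_eq_left_inv hAA, inv_def, hdet, Ring.inverse_one, one_smul]

theorem min_add_le_trace_diagonal_sub (a b c : ℝ) (i : Fin 3) :
    min (a + b) (min (a + c) (b + c)) ≤ (diagonal ![a, b, c]).trace - ![a, b, c] i := by
  have : min (a + b) (min (a + c) (b + c)) ≤ b + c ∧ min (a + b) (min (a + c) (b + c)) ≤ a + c ∧
      min (a + b) (min (a + c) (b + c)) ≤ a + b := by simp
  fin_cases i <;>
    simp only [trace_diagonal, Fin.sum_univ_three, cons_val_zero, cons_val_one, cons_val,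
      Fin.isValue, Fin.zero_eta, Fin.mk_one, Fin.reduceFinMk] <;>
    linarith

section SpecialOrthogonal

variable {Q : Matrix (Fin 3) (Fin 3) ℝ}

/-- If `Q` is represented by the unit quaternion `(q₀, q)`, then `1 + 2 Qᵢᵢ - tr Q = 4 qᵢ²`. -/
theorem one_add_two_mul_diag_sub_trace_nonneg (hQ : Q ∈ specialOrthogonalGroup (Fin 3) ℝ)
    (i : Fin 3) : 0 ≤ 1 + 2 * Q i i - Q.trace := by
  have htr : Q.trace ≤ 3 := by
    simpa using trace_le_card_of_mem_orthogonalGroup (mem_specialOrthogonalGroup_iff.mp hQ).1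
  obtain ⟨hc, hr, ha⟩ := orthogonal_and_adjugate_eq_transpose_of_mem_specialOrthogonalGroup hQ
  simp only [← ext_iff, Fin.forall_fin_succ, mul_apply, transpose_apply, Fin.sum_univ_three,
    one_apply, adjugate_fin_three, of_apply, cons_val', cons_val_fin_one, cons_val_zero,
    cons_val_succ, Fin.succ_zero_eq_one, Fin.succ_one_eq_two, IsEmpty.forall_iff, and_true,
    ↓reduceIte, zero_ne_one, Fin.reduceEq, Fin.succ_ne_zero, Fin.isValue] at hc hr ha
  obtain ⟨s, t, hsos⟩ : ∃ s t : ℝ, (3 - Q.trace) * (1 + 2 * Q i i - Q.trace) =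
      (1 + 2 * Q i i - Q.trace) ^ 2 + s ^ 2 + t ^ 2 := by
    rw [trace_fin_three]
    fin_cases i
    · exact ⟨Q 1 0 + Q 0 1, Q 0 2 + Q 2 0, by grind⟩
    · exact ⟨Q 1 0 + Q 0 1, Q 2 1 + Q 1 2, by grind⟩
    · exact ⟨Q 0 2 + Q 2 0, Q 2 1 + Q 1 2, by grind⟩
  nlinarith [sq_nonneg s, sq_nonneg t]

theorem one_sub_sq_diag_le_three_sub_trace (hQ : Q ∈ specialOrthogonalGroup (Fin 3) ℝ)
    (i : Fin 3) : 1 - Q i i ^ 2 ≤ 3 - Q.trace := by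
  nlinarith [one_add_two_mul_diag_sub_trace_nonneg hQ i, sq_nonneg (1 - Q i i)]

theorem vee_sub_transpose_dotProduct_self (hQ : Q ∈ specialOrthogonalGroup (Fin 3) ℝ) :
    vee (Q - Qᵀ) ⬝ᵥ vee (Q - Qᵀ) = (3 - Q.trace) * (1 + Q.trace) := by
  obtain ⟨hc, hr, ha⟩ := orthogonal_and_adjugate_eq_transpose_of_mem_specialOrthogonalGroup hQ
  simp only [← ext_iff, Fin.forall_fin_succ, mul_apply, transpose_apply, Fin.sum_univ_three,
    one_apply, adjugate_fin_three, of_apply, cons_val', cons_val_fin_one, cons_val_zero,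
    cons_val_succ, Fin.succ_zero_eq_one, Fin.succ_one_eq_two, IsEmpty.forall_iff, and_true,
    ↓reduceIte, zero_ne_one, Fin.reduceEq, Fin.succ_ne_zero, Fin.isValue] at hc hr ha
  simp only [dotProduct, vee, Matrix.sub_apply, transpose_apply, Fin.sum_univ_three, cons_val_zero,
    cons_val_one, cons_val, trace_fin_three]
  grind

/-- In angle-axis form `Q = exp (θ [a]ₓ)` this is the formula
`vee (K Q - Qᵀ K) = sin θ (tr K - K) a + (1 - cos θ) a ×₃ K a`, multiplied by `2 (1 + tr Q)`. -/
theorem two_mul_one_add_trace_smul_vee (k : Fin 3 → ℝ)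
    (hQ : Q ∈ specialOrthogonalGroup (Fin 3) ℝ) :
    (2 * (1 + Q.trace)) • vee (diagonal k * Q - Qᵀ * diagonal k) =
      (1 + Q.trace) • ((diagonal k).trace • vee (Q - Qᵀ) - diagonal k *ᵥ vee (Q - Qᵀ)) +
        vee (Q - Qᵀ) ⨯₃ (diagonal k *ᵥ vee (Q - Qᵀ)) := by
  obtain ⟨hc, hr, ha⟩ := orthogonal_and_adjugate_eq_transpose_of_mem_specialOrthogonalGroup hQ
  simp only [← ext_iff, Fin.forall_fin_succ, mul_apply, transpose_apply, Fin.sum_univ_three,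
    one_apply, adjugate_fin_three, of_apply, cons_val', cons_val_fin_one, cons_val_zero,
    cons_val_succ, Fin.succ_zero_eq_one, Fin.succ_one_eq_two, IsEmpty.forall_iff, and_true,
    ↓reduceIte, zero_ne_one, Fin.reduceEq, Fin.succ_ne_zero, Fin.isValue] at hc hr ha
  have hK : diagonal k *ᵥ vee (Q - Qᵀ) =
      ![k 0 * (Q 2 1 - Q 1 2), k 1 * (Q 0 2 - Q 2 0), k 2 * (Q 1 0 - Q 0 1)] := by
    ext i; fin_cases i <;> simp [mulVec_diagonal, vee]
  rw [hK]
  ext i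
  fin_cases i <;>
    simp only [vee, cross_apply, trace_diagonal, trace_fin_three, Fin.sum_univ_three, diagonal_mul,
      mul_diagonal, Matrix.sub_apply, transpose_apply, Pi.add_apply, Pi.smul_apply, smul_eq_mul,
      smul_cons, smul_empty, sub_cons, head_cons, tail_cons, cons_val_zero, cons_val_one, cons_val,
      Fin.isValue, Fin.zero_eta, Fin.mk_one, Fin.reduceFinMk] <;>
    grind

variable {k : Fin 3 → ℝ} {h : ℝ}

theorem sq_mul_three_sub_trace_mul_one_add_trace_le (hQ : Q ∈ specialOrthogonalGroup (Fin 3) ℝ)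
    (hh : 0 ≤ h) (hk : ∀ i, h ≤ (diagonal k).trace - k i) (hW : 0 < 1 + Q.trace) :
    h ^ 2 * ((3 - Q.trace) * (1 + Q.trace)) ≤
      4 * (vee (diagonal k * Q - Qᵀ * diagonal k) ⬝ᵥ vee (diagonal k * Q - Qᵀ * diagonal k)) := by
  set E := vee (diagonal k * Q - Qᵀ * diagonal k)
  set d := vee (Q - Qᵀ)
  set v := (diagonal k).trace • d - diagonal k *ᵥ d
  set c := d ⨯₃ (diagonal k *ᵥ d)
  have hv : v = diagonal (fun i => (diagonal k).trace - k i) *ᵥ d := by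
    ext i; simp [v, mulVec_diagonal, sub_mul]
  have hvc : v ⬝ᵥ c = 0 := by
    simp [v, c, sub_dotProduct, smul_dotProduct, dot_self_cross, dot_cross_self]
  have hcc : 0 ≤ c ⬝ᵥ c := by simpa using dotProduct_self_star_nonneg c
  have hEE : (2 * (1 + Q.trace)) ^ 2 * (E ⬝ᵥ E) =
      (1 + Q.trace) ^ 2 * (v ⬝ᵥ v) + c ⬝ᵥ c := by
    have hid : (2 * (1 + Q.trace)) • E = (1 + Q.trace) • v + c :=
      two_mul_one_add_trace_smul_vee k hQ
    have := congrArg (fun x => x ⬝ᵥ x) hid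
    simp only [smul_dotProduct, dotProduct_smul, add_dotProduct, dotProduct_add, hvc,
      dotProduct_comm c v, smul_eq_mul] at this
    linear_combination this
  have hvv : h ^ 2 * (d ⬝ᵥ d) ≤ v ⬝ᵥ v := hv ▸ sq_mul_dotProduct_self_le_diagonal_mulVec hh hk
  rw [← vee_sub_transpose_dotProduct_self hQ]
  refine le_of_mul_le_mul_left ?_ (pow_pos hW 2)
  nlinarith [mul_le_mul_of_nonneg_left hvv (sq_nonneg (1 + Q.trace))]

theorem mul_three_sub_trace_le_two_mul_trace_diagonal_mul_one_sub
    (hQ : Q ∈ specialOrthogonalGroup (Fin 3) ℝ) (hk : ∀ i, h ≤ (diagonal k).trace - k i) :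
    h * (3 - Q.trace) ≤ 2 * (diagonal k * (1 - Q)).trace := by
  have hF := one_add_two_mul_diag_sub_trace_nonneg hQ
  have hk' : ∀ i, 0 ≤ k 0 + k 1 + k 2 - k i - h := fun i => by
    have := hk i
    simp only [trace_diagonal, Fin.sum_univ_three] at this
    linarith
  simp only [trace_fin_three, diagonal_mul, Matrix.sub_apply, one_apply_eq] at hF ⊢
  nlinarith [mul_nonneg (hk' 0) (hF 0), mul_nonneg (hk' 1) (hF 1), mul_nonneg (hk' 2) (hF 2)]

theorem mul_sub_mul_three_sub_trace_le {ψ : ℝ} (hQ : Q ∈ specialOrthogonalGroup (Fin 3) ℝ)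
    (hk : ∀ i, h ≤ (diagonal k).trace - k i) (hh : 0 < h) (hψ : ψ < h)
    (hΨ : (1 / 2) * (diagonal k * (1 - Q)).trace < ψ) :
    h * (h - ψ) * (3 - Q.trace) ≤
      vee (diagonal k * Q - Qᵀ * diagonal k) ⬝ᵥ vee (diagonal k * Q - Qᵀ * diagonal k) := by
  have hU : h * (3 - Q.trace) < 4 * ψ := by
    linarith [mul_three_sub_trace_le_two_mul_trace_diagonal_mul_one_sub hQ hk]
  have hU0 : 0 ≤ h * (3 - Q.trace) := mul_nonneg hh.le (by
    simpa using trace_le_card_of_mem_orthogonalGroup (mem_specialOrthogonalGroup_iff.mp hQ).1)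
  have hW : 4 * (h - ψ) < h * (1 + Q.trace) := by linarith
  have hW0 : 0 < 1 + Q.trace := pos_of_mul_pos_right (by linarith) hh.le
  nlinarith [sq_mul_three_sub_trace_mul_one_add_trace_le hQ hh.le hk hW0,
    mul_le_mul_of_nonneg_left hW.le hU0]

end SpecialOrthogonal

theorem stmt2_general (k1 k2 k3 ψ : ℝ)
    (KR : Matrix (Fin 3) (Fin 3) ℝ) (hKR : KR = Matrix.diagonal ![k1, k2, k3])
    (R Rd : Matrix (Fin 3) (Fin 3) ℝ)
    (hR : Rᵀ * R = 1) (hRdet : R.det = 1)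
    (hRd : Rdᵀ * Rd = 1) (hRddet : Rd.det = 1)
    (Q : Matrix (Fin 3) (Fin 3) ℝ) (hQ : Q = Rdᵀ * R)
    (e3 : Fin 3 → ℝ) (he3 : e3 = ![0, 0, 1])
    (b3 b3d : Fin 3 → ℝ) (hb3 : b3 = R.mulVec e3) (hb3d : b3d = Rd.mulVec e3)
    (h1 h3 g2 ΨK : ℝ) (eKR : Fin 3 → ℝ)
    (hh1 : h1 = min (k1 + k2) (min (k1 + k3) (k2 + k3)))
    (hh3 : h3 = max (k1 + k2) (max (k1 + k3) (k2 + k3)))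
    (hg2 : g2 = h3 / (h1 * (h1 - ψ)))
    (hΨK : ΨK = (1 / 2) * (KR * (1 - Q)).trace)
    (heKR : eKR = (1 / 2 : ℝ) • vee (KR * Q - Qᵀ * KR))
    (hψpos : 0 < ψ) (hψlt : ψ < h1) (hΨ : ΨK < ψ) :
    euclNorm (b3d - (b3d ⬝ᵥ b3) • b3) ≤ Real.sqrt (4 * g2 / h1) * euclNorm eKR := by
  subst hKR hQ he3 hb3 hb3d heKR hΨK hg2
  set E := vee (diagonal ![k1, k2, k3] * (Rdᵀ * R) - (Rdᵀ * R)ᵀ * diagonal ![k1, k2, k3])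
  have hSO : Rdᵀ * R ∈ specialOrthogonalGroup (Fin 3) ℝ :=
    transpose_mul_mem_specialOrthogonalGroup
      (mem_specialOrthogonalGroup_iff.mpr ⟨(mem_orthogonalGroup_iff' _ _).mpr hRd, hRddet⟩)
      (mem_specialOrthogonalGroup_iff.mpr ⟨(mem_orthogonalGroup_iff' _ _).mpr hR, hRdet⟩)
  have hk : ∀ i, h1 ≤ (diagonal ![k1, k2, k3]).trace - ![k1, k2, k3] i :=
    hh1 ▸ min_add_le_trace_diagonal_sub k1 k2 k3
  have h1pos : 0 < h1 := hψpos.trans hψlt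
  have h13 : h1 ≤ h3 := by rw [hh1, hh3]; exact (min_le_left _ _).trans (le_max_left _ _)
  have hE : 0 ≤ E ⬝ᵥ E := by simpa using dotProduct_self_star_nonneg E
  have he3 : ![0, 0, 1] = Pi.single (2 : Fin 3) (1 : ℝ) := by ext i; fin_cases i <;> rfl
  rw [he3, euclNorm_sub_dotProduct_smul_mulVec_single hR hRd, euclNorm_eq_sqrt_dotProduct,
    ← Real.sqrt_mul' _ (by simpa [smul_dotProduct, dotProduct_smul] using hE)]
  simp only [smul_dotProduct, dotProduct_smul, smul_eq_mul]
  apply Real.sqrt_le_sqrt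
  calc 1 - (Rdᵀ * R) 2 2 ^ 2 ≤ 3 - (Rdᵀ * R).trace := one_sub_sq_diag_le_three_sub_trace hSO 2
    _ ≤ E ⬝ᵥ E / (h1 * (h1 - ψ)) := by
      rw [le_div_iff₀ (mul_pos h1pos (sub_pos.2 hψlt))]
      linarith [mul_sub_mul_three_sub_trace_le hSO hk h1pos hψlt hΨ]
    _ ≤ h3 / h1 * (E ⬝ᵥ E / (h1 * (h1 - ψ))) :=
      le_mul_of_one_le_left (div_nonneg hE (mul_pos h1pos (sub_pos.2 hψlt)).le)
        ((one_le_div h1pos).2 h13)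
    _ = _ := by ring

theorem stmt2 (k1 k2 k3 ψ : ℝ)
    (hk1 : 0 < k1) (hk2 : 0 < k2) (hk3 : 0 < k3)
    (hd12 : k1 ≠ k2) (hd13 : k1 ≠ k3) (hd23 : k2 ≠ k3)
    (KR : Matrix (Fin 3) (Fin 3) ℝ) (hKR : KR = Matrix.diagonal ![k1, k2, k3])
    (R Rd : Matrix (Fin 3) (Fin 3) ℝ)
    (hR : Rᵀ * R = 1) (hRdet : R.det = 1)
    (hRd : Rdᵀ * Rd = 1) (hRddet : Rd.det = 1)
    (Q : Matrix (Fin 3) (Fin 3) ℝ) (hQ : Q = Rdᵀ * R)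
    (e3 : Fin 3 → ℝ) (he3 : e3 = ![0, 0, 1])
    (b3 b3d : Fin 3 → ℝ) (hb3 : b3 = R.mulVec e3) (hb3d : b3d = Rd.mulVec e3)
    (h1 h2 h3 g2 ΨK : ℝ) (eKR : Fin 3 → ℝ)
    (hh1 : h1 = min (k1 + k2) (min (k1 + k3) (k2 + k3)))
    (hh2 : h2 = max ((k1 - k2) ^ 2) (max ((k1 - k3) ^ 2) ((k2 - k3) ^ 2)))
    (hh3 : h3 = max (k1 + k2) (max (k1 + k3) (k2 + k3)))
    (hg2 : g2 = h3 / (h1 * (h1 - ψ)))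
    (hΨK : ΨK = (1 / 2) * (KR * (1 - Q)).trace)
    (heKR : eKR = (1 / 2 : ℝ) • vee (KR * Q - Qᵀ * KR))
    (hψpos : 0 < ψ) (hψlt : ψ < h1) (hΨ : ΨK < ψ) :
    euclNorm (b3d - (b3d ⬝ᵥ b3) • b3) ≤ Real.sqrt (4 * g2 / h1) * euclNorm eKR :=
  stmt2_general k1 k2 k3 ψ KR hKR R Rd hR hRdet hRd hRddet Q hQ e3 he3 b3 b3d hb3 hb3d h1 h3 g2 ΨK
    eKR hh1 hh3 hg2 hΨK heKR hψpos hψlt hΨ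
end
end

section
/- Fix d ≥ 1 and n ≥ 1. For each of two Bézier curves B¹(t) = Σ_{l=0}^n b_l^n(t)·c¹_l and B²(t) = Σ_{l=0}^n b_l^n(t)·c²_l with control points c¹_l, c²_l ∈ ℝ^d and Bernstein basis b_l^n(t) = C(n,l)·t^l·(1−t)^{n−l}, t ∈ [0,1], suppose there exist ε₁, ε₂ ≥ 0 such that for every l, min{‖c¹_l − c¹_0‖₁, ‖c¹_l − c¹_n‖₁} ≤ ε₁ and min{‖c²_l − c²_0‖₁, ‖c²_l − c²_n‖₁} ≤ ε₂. Let cent(Bⁱ) = (1/(n+1))·Σ_{l=0}^n cⁱ_l. If ‖cent(B¹) − cent(B²)‖₁ ≥ ‖c¹_0 − c¹_n‖₁ + ‖c²_0 − c²_n‖₁ + 2(ε₁ + ε₂) + ε_inter·√d for some ε_inter ≥ 0, then ‖B¹(t) − B²(t)‖₂ ≥ ε_inter for all t ∈ [0,1]. -/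
/-!
A point `B(t)` of a Bézier curve and the centroid of its control points both lie in the convex
hull of the control points, so they are no farther apart than some two control points. Each
control point is within `ε` of `c₀` or of `cₙ`, so any two are within `‖c₀ - cₙ‖₁ + 2ε`. The
triangle inequality through the two curve points then turns the separation of the centroids into
`‖B¹(t) - B²(t)‖₁ ≥ ε_inter √d`, and `‖x‖₁ ≤ √d ‖x‖₂` finishes.
-/

open Finset Metric Set WithLp
open scoped ENNReal

theorem dist_le_dist_add_two_mul_of_min_dist_le {X : Type*} [PseudoMetricSpace X]
    {p q a b : X} {ε : ℝ}
    (ha : min (dist a p) (dist a q) ≤ ε) (hb : min (dist b p) (dist b q) ≤ ε) :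
    dist a b ≤ dist p q + 2 * ε := by
  have := dist_nonneg (x := p) (y := q)
  rcases min_le_iff.mp ha with ha | ha <;> rcases min_le_iff.mp hb with hb | hb
  · linarith [dist_triangle_right a b p]
  · linarith [dist_triangle4 a p q b, dist_comm q b]
  · linarith [dist_triangle4 a q p b, dist_comm q p, dist_comm p b]
  · linarith [dist_triangle_right a b q]

theorem PiLp.norm_toLp_one_le_sqrt_card_mul_norm_toLp_two {ι : Type*} [Fintype ι]
    {β : ι → Type*} [∀ i, SeminormedAddCommGroup (β i)] (x : ∀ i, β i) :
    ‖toLp 1 x‖ ≤ √(Fintype.card ι) * ‖toLp 2 x‖ := by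
  rw [PiLp.norm_eq_of_L1, PiLp.norm_eq_of_L2, ← Real.sqrt_mul (by positivity)]
  refine Real.le_sqrt_of_sq_le ?_
  simpa using sq_sum_le_card_mul_sum_sq (s := univ) (f := fun i => ‖x i‖)

section Bezier

variable {E : Type*} {n : ℕ}

section Module

variable [AddCommGroup E] [Module ℝ E]

noncomputable def bezierCurve (c : Fin (n + 1) → E) (t : ℝ) : E :=
  ∑ l : Fin (n + 1), ((n.choose l : ℝ) * t ^ (l : ℕ) * (1 - t) ^ (n - (l : ℕ))) • c l

noncomputable def controlCentroid (c : Fin (n + 1) → E) : E :=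
  (1 / (n + 1) : ℝ) • ∑ l, c l

theorem toLp_bezierCurve (p : ℝ≥0∞) (c : Fin (n + 1) → E) (t : ℝ) :
    toLp p (bezierCurve c t) = bezierCurve (fun l => toLp p (c l)) t := by
  simp [bezierCurve, toLp_sum]

theorem toLp_controlCentroid (p : ℝ≥0∞) (c : Fin (n + 1) → E) :
    toLp p (controlCentroid c) = controlCentroid (fun l => toLp p (c l)) := by
  simp [controlCentroid, toLp_sum]

theorem sum_smul_mem_convexHull_range {ι : Type*} [Fintype ι] {w : ι → ℝ}
    (hw₀ : ∀ i, 0 ≤ w i) (hw₁ : ∑ i, w i = 1) (c : ι → E) :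
    ∑ i, w i • c i ∈ convexHull ℝ (range c) :=
  (convex_convexHull ℝ _).sum_mem (fun i _ => hw₀ i) hw₁ fun i _ =>
    subset_convexHull ℝ _ (mem_range_self i)

theorem bezierCurve_mem_convexHull (c : Fin (n + 1) → E) {t : ℝ} (ht : t ∈ Icc (0 : ℝ) 1) :
    bezierCurve c t ∈ convexHull ℝ (range c) := by
  have hbernstein : bezierCurve c t = ∑ l : Fin (n + 1), bernstein n l ⟨t, ht⟩ • c l := by
    simp [bezierCurve, bernstein_apply]
  rw [hbernstein]
  exact sum_smul_mem_convexHull_range (fun _ => bernstein_nonneg) (bernstein.probability n _) c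

theorem controlCentroid_mem_convexHull (c : Fin (n + 1) → E) :
    controlCentroid c ∈ convexHull ℝ (range c) := by
  rw [controlCentroid, smul_sum]
  refine sum_smul_mem_convexHull_range (fun _ => by positivity) ?_ c
  simp only [sum_const, card_univ, Fintype.card_fin, nsmul_eq_mul]
  push_cast
  field_simp

end Module

variable [SeminormedAddCommGroup E] [NormedSpace ℝ E]

theorem dist_controlCentroid_bezierCurve_le {c : Fin (n + 1) → E} {t ε : ℝ}
    (ht : t ∈ Icc (0 : ℝ) 1)
    (hc : ∀ l, min (dist (c l) (c 0)) (dist (c l) (c (Fin.last n))) ≤ ε) :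
    dist (controlCentroid c) (bezierCurve c t) ≤ dist (c 0) (c (Fin.last n)) + 2 * ε := by
  obtain ⟨_, ⟨k, rfl⟩, _, ⟨l, rfl⟩, hdist⟩ := convexHull_exists_dist_ge2
    (controlCentroid_mem_convexHull c) (bezierCurve_mem_convexHull c ht)
  exact hdist.trans (dist_le_dist_add_two_mul_of_min_dist_le (hc k) (hc l))

theorem le_dist_bezierCurve_of_controlCentroid_sep {c₁ c₂ : Fin (n + 1) → E} {t ε₁ ε₂ δ : ℝ}
    (ht : t ∈ Icc (0 : ℝ) 1)
    (hc₁ : ∀ l, min (dist (c₁ l) (c₁ 0)) (dist (c₁ l) (c₁ (Fin.last n))) ≤ ε₁)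
    (hc₂ : ∀ l, min (dist (c₂ l) (c₂ 0)) (dist (c₂ l) (c₂ (Fin.last n))) ≤ ε₂)
    (hsep : dist (c₁ 0) (c₁ (Fin.last n)) + dist (c₂ 0) (c₂ (Fin.last n)) + 2 * (ε₁ + ε₂) + δ ≤
      dist (controlCentroid c₁) (controlCentroid c₂)) :
    δ ≤ dist (bezierCurve c₁ t) (bezierCurve c₂ t) := by
  have h₁ := dist_controlCentroid_bezierCurve_le ht hc₁
  have h₂ := dist_controlCentroid_bezierCurve_le ht hc₂
  have := dist_triangle4 (controlCentroid c₁) (bezierCurve c₁ t) (bezierCurve c₂ t)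
    (controlCentroid c₂)
  rw [dist_comm (bezierCurve c₂ t)] at this
  linarith

end Bezier

theorem stmt4_general (d n : ℕ) (hd : 1 ≤ d)
    (c1 c2 : Fin (n + 1) → Fin d → ℝ)
    (ε1 ε2 εinter : ℝ)
    (l1norm l2norm : (Fin d → ℝ) → ℝ)
    (hl1 : l1norm = fun x => ∑ i, |x i|)
    (hl2 : l2norm = fun x => Real.sqrt (∑ i, x i ^ 2))
    (B1 B2 : ℝ → Fin d → ℝ)
    (hB1 : B1 = fun t => ∑ l : Fin (n + 1),
      ((n.choose l : ℝ) * t ^ (l : ℕ) * (1 - t) ^ (n - (l : ℕ))) • c1 l)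
    (hB2 : B2 = fun t => ∑ l : Fin (n + 1),
      ((n.choose l : ℝ) * t ^ (l : ℕ) * (1 - t) ^ (n - (l : ℕ))) • c2 l)
    (hc1 : ∀ l, min (l1norm (c1 l - c1 0)) (l1norm (c1 l - c1 (Fin.last n))) ≤ ε1)
    (hc2 : ∀ l, min (l1norm (c2 l - c2 0)) (l1norm (c2 l - c2 (Fin.last n))) ≤ ε2)
    (cent1 cent2 : Fin d → ℝ)
    (hcent1 : cent1 = (1 / (n + 1) : ℝ) • ∑ l, c1 l)
    (hcent2 : cent2 = (1 / (n + 1) : ℝ) • ∑ l, c2 l)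
    (hsep : l1norm (cent1 - cent2) ≥
      l1norm (c1 0 - c1 (Fin.last n)) + l1norm (c2 0 - c2 (Fin.last n)) +
        2 * (ε1 + ε2) + εinter * Real.sqrt d) :
    ∀ t ∈ Set.Icc (0 : ℝ) 1, l2norm (B1 t - B2 t) ≥ εinter := by
  intro t ht
  have hl1_dist (x y : Fin d → ℝ) : l1norm (x - y) = dist (toLp 1 x) (toLp 1 y) := by
    simp [hl1, dist_eq_norm, ← toLp_sub, PiLp.norm_eq_of_L1]
  have hl2_norm : l2norm (B1 t - B2 t) = ‖toLp 2 (B1 t - B2 t)‖ := by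
    simp [hl2, PiLp.norm_eq_of_L2]
  simp only [hl1_dist] at hc1 hc2 hsep
  have hB1t : B1 t = bezierCurve c1 t := by rw [hB1]; rfl
  have hB2t : B2 t = bezierCurve c2 t := by rw [hB2]; rfl
  have hfar : εinter * √d ≤ dist (toLp 1 (B1 t)) (toLp 1 (B2 t)) := by
    rw [hB1t, hB2t, toLp_bezierCurve, toLp_bezierCurve]
    refine le_dist_bezierCurve_of_controlCentroid_sep ht hc1 hc2 ?_
    rwa [← toLp_controlCentroid, ← toLp_controlCentroid, controlCentroid, controlCentroid,
      ← hcent1, ← hcent2]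
  have hl1_le := PiLp.norm_toLp_one_le_sqrt_card_mul_norm_toLp_two (B1 t - B2 t)
  rw [Fintype.card_fin, toLp_sub, ← dist_eq_norm] at hl1_le
  rw [hl2_norm, ge_iff_le]
  refine le_of_mul_le_mul_left ?_ (Real.sqrt_pos.2 (Nat.cast_pos.2 hd))
  linarith

theorem stmt4 (d n : ℕ) (hd : 1 ≤ d) (hn : 1 ≤ n)
    (c1 c2 : Fin (n + 1) → Fin d → ℝ)
    (ε1 ε2 εinter : ℝ) (hε1 : 0 ≤ ε1) (hε2 : 0 ≤ ε2) (hεinter : 0 ≤ εinter)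
    (l1norm l2norm : (Fin d → ℝ) → ℝ)
    (hl1 : l1norm = fun x => ∑ i, |x i|)
    (hl2 : l2norm = fun x => Real.sqrt (∑ i, x i ^ 2))
    (B1 B2 : ℝ → Fin d → ℝ)
    (hB1 : B1 = fun t => ∑ l : Fin (n + 1),
      ((n.choose l : ℝ) * t ^ (l : ℕ) * (1 - t) ^ (n - (l : ℕ))) • c1 l)
    (hB2 : B2 = fun t => ∑ l : Fin (n + 1),
      ((n.choose l : ℝ) * t ^ (l : ℕ) * (1 - t) ^ (n - (l : ℕ))) • c2 l)
    (hc1 : ∀ l, min (l1norm (c1 l - c1 0)) (l1norm (c1 l - c1 (Fin.last n))) ≤ ε1)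
    (hc2 : ∀ l, min (l1norm (c2 l - c2 0)) (l1norm (c2 l - c2 (Fin.last n))) ≤ ε2)
    (cent1 cent2 : Fin d → ℝ)
    (hcent1 : cent1 = (1 / (n + 1) : ℝ) • ∑ l, c1 l)
    (hcent2 : cent2 = (1 / (n + 1) : ℝ) • ∑ l, c2 l)
    (hsep : l1norm (cent1 - cent2) ≥
      l1norm (c1 0 - c1 (Fin.last n)) + l1norm (c2 0 - c2 (Fin.last n)) +
        2 * (ε1 + ε2) + εinter * Real.sqrt d) :
    ∀ t ∈ Set.Icc (0 : ℝ) 1, l2norm (B1 t - B2 t) ≥ εinter :=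
  stmt4_general d n hd c1 c2 ε1 ε2 εinter l1norm l2norm hl1 hl2 B1 B2 hB1 hB2 hc1 hc2 cent1 cent2
    hcent1 hcent2 hsep
end

section
/- Let J be a 3×3 symmetric positive-definite matrix with smallest eigenvalue λ_min(J) > 0, let g1 > 0, c2 > 0, ψ > 0, and α_ψ ∈ [1/2, 1). Let e_R, e_ω ∈ ℝ³ and Ψ₀ ∈ ℝ satisfy g1·‖e_R‖² ≤ Ψ₀, Ψ₀ < α_ψ·ψ, and (1/2)·e_ωᵀ J e_ω ≤ (1 − α_ψ)·ψ. Then (1/2)·e_ωᵀ J e_ω + Ψ₀ + c2·e_Rᵀ e_ω ≤ (1 + c2·√(2·α_ψ·(1 − α_ψ)/(λ_min(J)·g1)))·ψ. -/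
/-!
The kinetic and potential parts add up to at most `(1 - αψ) ψ + αψ ψ = ψ`. For the cross term,
the hypotheses confine `eR` to the ball `‖eR‖² ≤ αψ ψ / g1` and, via the Rayleigh bound
`λ_min ‖eω‖² ≤ eωᵀ J eω`, `eω` to the ball `‖eω‖² ≤ 2 (1 - αψ) ψ / λ_min`; Cauchy–Schwarz bounds
`eRᵀ eω` by the geometric mean of the two radii.
-/

open Matrix

noncomputable section

lemma euclNorm_sq (x : Fin 3 → ℝ) : euclNorm x ^ 2 = x ⬝ᵥ x := by
  rw [euclNorm, Real.sq_sqrt (by positivity)]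
  simp only [dotProduct, sq]

lemma dotProduct_le_sqrt_mul_sqrt {ι : Type*} [Fintype ι] {x y : ι → ℝ} {a b : ℝ}
    (hx : x ⬝ᵥ x ≤ a) (hy : y ⬝ᵥ y ≤ b) : x ⬝ᵥ y ≤ √a * √b := by
  simp only [dotProduct, ← sq] at hx hy ⊢
  exact (Real.sum_mul_le_sqrt_mul_sqrt _ x y).trans
    (mul_le_mul (Real.sqrt_le_sqrt hx) (Real.sqrt_le_sqrt hy) (Real.sqrt_nonneg _)
      (Real.sqrt_nonneg _))

namespace Matrix

variable {n : Type*} [Fintype n] [DecidableEq n] {A : Matrix n n ℝ}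

lemma IsHermitian.posSemidef_sub_algebraMap (hA : A.IsHermitian) {c : ℝ}
    (hc : ∀ i, c ≤ hA.eigenvalues i) : (A - algebraMap ℝ (Matrix n n ℝ) c).PosSemidef := by
  refine posSemidef_iff_isHermitian_and_spectrum_nonneg.mpr
    ⟨hA.sub ((IsSelfAdjoint.all c).algebraMap _), ?_⟩
  rw [← spectrum.sub_singleton_eq, hA.spectrum_real_eq_range_eigenvalues]
  rintro _ ⟨_, ⟨i, rfl⟩, _, rfl, rfl⟩
  simpa using hc i

lemma IsHermitian.mul_dotProduct_self_le (hA : A.IsHermitian) {c : ℝ}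
    (hc : ∀ i, c ≤ hA.eigenvalues i) (x : n → ℝ) : c * (x ⬝ᵥ x) ≤ x ⬝ᵥ A *ᵥ x := by
  simpa [sub_mulVec, Algebra.algebraMap_eq_smul_one, smul_mulVec, dotProduct_smul] using
    (hA.posSemidef_sub_algebraMap hc).dotProduct_mulVec_nonneg x

lemma PosDef.iInf_eigenvalues_pos [Nonempty n] (hA : A.PosDef) :
    0 < ⨅ i, hA.isHermitian.eigenvalues i := by
  obtain ⟨i, hi⟩ := exists_eq_ciInf_of_finite (f := hA.isHermitian.eigenvalues)
  exact hi ▸ hA.eigenvalues_pos i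

end Matrix

theorem stmt10_general (J : Matrix (Fin 3) (Fin 3) ℝ) (hJ : J.PosDef)
    (lamMin : ℝ) (hlamMin : lamMin = ⨅ i, hJ.isHermitian.eigenvalues i)
    (g1 c2 ψ αψ : ℝ) (hg1 : 0 < g1) (hc2 : 0 < c2)
    (eR eω : Fin 3 → ℝ) (Ψ0 : ℝ)
    (hΨlb : g1 * euclNorm eR ^ 2 ≤ Ψ0)
    (hΨub : Ψ0 < αψ * ψ)
    (hω : (1 / 2) * (eω ⬝ᵥ J.mulVec eω) ≤ (1 - αψ) * ψ) :
    (1 / 2) * (eω ⬝ᵥ J.mulVec eω) + Ψ0 + c2 * (eR ⬝ᵥ eω) ≤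
      (1 + c2 * Real.sqrt (2 * αψ * (1 - αψ) / (lamMin * g1))) * ψ := by
  have hlam : 0 < lamMin := hlamMin ▸ hJ.iInf_eigenvalues_pos
  have hrayleigh : lamMin * (eω ⬝ᵥ eω) ≤ eω ⬝ᵥ J *ᵥ eω :=
    hJ.isHermitian.mul_dotProduct_self_le
      (fun i => hlamMin ▸ ciInf_le (Finite.bddBelow_range _) i) eω
  have hαψψ : 0 ≤ αψ * ψ := by linarith [mul_nonneg hg1.le (sq_nonneg (euclNorm eR))]
  have hψ : 0 ≤ ψ := by
    have : 0 ≤ eω ⬝ᵥ J *ᵥ eω := by simpa using hJ.posSemidef.dotProduct_mulVec_nonneg eω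
    linarith
  rw [euclNorm_sq] at hΨlb
  have hR_sq : eR ⬝ᵥ eR ≤ αψ * ψ / g1 := by
    rw [le_div_iff₀ hg1]; linarith
  have hω_sq : eω ⬝ᵥ eω ≤ 2 * (1 - αψ) * ψ / lamMin := by
    rw [le_div_iff₀ hlam]; linarith
  have hcross : eR ⬝ᵥ eω ≤ Real.sqrt (2 * αψ * (1 - αψ) / (lamMin * g1)) * ψ :=
    calc eR ⬝ᵥ eω ≤ √(αψ * ψ / g1) * √(2 * (1 - αψ) * ψ / lamMin) :=
          dotProduct_le_sqrt_mul_sqrt hR_sq hω_sq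
      _ = √(2 * αψ * (1 - αψ) / (lamMin * g1) * ψ ^ 2) := by
          rw [← Real.sqrt_mul (by positivity)]; congr 1; field_simp
      _ = _ := by rw [Real.sqrt_mul' _ (sq_nonneg ψ), Real.sqrt_sq hψ]
  linarith [mul_le_mul_of_nonneg_left hcross hc2.le]

theorem stmt10 (J : Matrix (Fin 3) (Fin 3) ℝ) (hJ : J.PosDef)
    (lamMin : ℝ) (hlamMin : lamMin = ⨅ i, hJ.isHermitian.eigenvalues i) (hlamPos : 0 < lamMin)
    (g1 c2 ψ αψ : ℝ) (hg1 : 0 < g1) (hc2 : 0 < c2) (hψ : 0 < ψ)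
    (hαψ : αψ ∈ Set.Ico (1 / 2 : ℝ) 1)
    (eR eω : Fin 3 → ℝ) (Ψ0 : ℝ)
    (hΨlb : g1 * euclNorm eR ^ 2 ≤ Ψ0)
    (hΨub : Ψ0 < αψ * ψ)
    (hω : (1 / 2) * (eω ⬝ᵥ J.mulVec eω) ≤ (1 - αψ) * ψ) :
    (1 / 2) * (eω ⬝ᵥ J.mulVec eω) + Ψ0 + c2 * (eR ⬝ᵥ eω) ≤
      (1 + c2 * Real.sqrt (2 * αψ * (1 - αψ) / (lamMin * g1))) * ψ :=
  stmt10_general J hJ lamMin hlamMin g1 c2 ψ αψ hg1 hc2 eR eω Ψ0 hΨlb hΨub hω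
end
end

section
/- Let J and K_ω be 3×3 symmetric positive-definite matrices. Let e_R, e_ω : ℝ → ℝ³ be differentiable and Ψ : ℝ → ℝ be differentiable, satisfying for all t ≥ 0: Ψ'(t) = e_R(t)ᵀ e_ω(t) and e_ω'(t) = −J⁻¹(e_R(t) + K_ω e_ω(t)). Define E(t) = (1/2)·e_ω(t)ᵀ J e_ω(t) + Ψ(t). Then E'(t) = −e_ω(t)ᵀ K_ω e_ω(t) ≤ 0 for all t ≥ 0; in particular E is non-increasing, and Ψ(t) ≤ E(0) for all t ≥ 0. -/
/-! Along the flow, `d/dt (½ eωᵀ J eω) = eωᵀ J eω' = -eωᵀ (eR + Kω eω)`, using the symmetry of `J`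
to differentiate the quadratic form; the cross term `-eωᵀ eR` cancels `Ψ' = eRᵀ eω`, leaving the
dissipation `-eωᵀ Kω eω ≤ 0`. So `E` is antitone on `[0, ∞)`, and since the kinetic term is
nonnegative, `Ψ t ≤ E t ≤ E 0`. -/

open Matrix

section

variable {ι κ : Type*} [Fintype ι] {t : ℝ}

theorem HasDerivAt.dotProduct {f g : ℝ → ι → ℝ} {f' g' : ι → ℝ}
    (hf : HasDerivAt f f' t) (hg : HasDerivAt g g' t) :
    HasDerivAt (fun s => f s ⬝ᵥ g s) (f' ⬝ᵥ g t + f t ⬝ᵥ g') t := by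
  have h := HasDerivAt.fun_sum (u := Finset.univ)
    fun i _ => (hasDerivAt_pi.mp hf i).fun_mul (hasDerivAt_pi.mp hg i)
  rwa [Finset.sum_add_distrib] at h

theorem HasDerivAt.mulVec (A : Matrix κ ι ℝ) {f : ℝ → ι → ℝ} {f' : ι → ℝ}
    (hf : HasDerivAt f f' t) : HasDerivAt (fun s => A *ᵥ f s) (A *ᵥ f') t :=
  hasDerivAt_pi.mpr fun i =>
    ((hasDerivAt_const t (A i)).dotProduct hf).congr_deriv (by rw [zero_dotProduct, zero_add]; rfl)

theorem Matrix.IsSymm.dotProduct_mulVec_comm {A : Matrix ι ι ℝ} (hA : A.IsSymm) (v w : ι → ℝ) :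
    v ⬝ᵥ A *ᵥ w = w ⬝ᵥ A *ᵥ v := by
  rw [dotProduct_mulVec, ← mulVec_transpose, hA.eq, dotProduct_comm]

theorem HasDerivAt.dotProduct_mulVec_self {A : Matrix ι ι ℝ} (hA : A.IsSymm)
    {f : ℝ → ι → ℝ} {f' : ι → ℝ} (hf : HasDerivAt f f' t) :
    HasDerivAt (fun s => f s ⬝ᵥ A *ᵥ f s) (2 * (f t ⬝ᵥ A *ᵥ f')) t := by
  refine (hf.dotProduct (hf.mulVec A)).congr_deriv ?_
  rw [hA.dotProduct_mulVec_comm f' (f t)]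
  ring

variable [DecidableEq ι]

theorem hasDerivAt_kinetic_add_potential {J K : Matrix ι ι ℝ} (hJ : J.IsSymm)
    (hJdet : IsUnit J.det)
    {eR eω : ℝ → ι → ℝ} {Ψ : ℝ → ℝ}
    (hΨ : HasDerivAt Ψ (eR t ⬝ᵥ eω t) t)
    (heω : HasDerivAt eω (-(J⁻¹ *ᵥ (eR t + K *ᵥ eω t))) t) :
    HasDerivAt (fun s => 1 / 2 * (eω s ⬝ᵥ J *ᵥ eω s) + Ψ s) (-(eω t ⬝ᵥ K *ᵥ eω t)) t := by
  refine (((heω.dotProduct_mulVec_self hJ).const_mul (1 / 2)).add hΨ).congr_deriv ?_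
  rw [mulVec_neg, mulVec_mulVec, mul_nonsing_inv _ hJdet, one_mulVec, dotProduct_neg,
    dotProduct_add, dotProduct_comm (eR t)]
  ring

end

theorem antitoneOn_of_hasDerivAt_nonpos {D : Set ℝ} (hD : Convex ℝ D) {f f' : ℝ → ℝ}
    (hf : ∀ x ∈ D, HasDerivAt f (f' x) x) (hf' : ∀ x ∈ D, f' x ≤ 0) : AntitoneOn f D :=
  antitoneOn_of_hasDerivWithinAt_nonpos hD (fun x hx => (hf x hx).continuousAt.continuousWithinAt)
    (fun x hx => (hf x (interior_subset hx)).hasDerivWithinAt) fun x hx => hf' x (interior_subset hx)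

theorem stmt11 (J Kω : Matrix (Fin 3) (Fin 3) ℝ) (hJ : J.PosDef) (hKω : Kω.PosDef)
    (eR eω : ℝ → Fin 3 → ℝ) (Ψ : ℝ → ℝ)
    (hΨ : ∀ t ≥ (0 : ℝ), HasDerivAt Ψ (eR t ⬝ᵥ eω t) t)
    (heω : ∀ t ≥ (0 : ℝ), HasDerivAt eω (-(J⁻¹.mulVec (eR t + Kω.mulVec (eω t)))) t)
    (E : ℝ → ℝ)
    (hE : E = fun t => (1 / 2) * (eω t ⬝ᵥ J.mulVec (eω t)) + Ψ t) :
    (∀ t ≥ (0 : ℝ), HasDerivAt E (-(eω t ⬝ᵥ Kω.mulVec (eω t))) t ∧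
        -(eω t ⬝ᵥ Kω.mulVec (eω t)) ≤ 0) ∧
      AntitoneOn E (Set.Ici 0) ∧
      ∀ t ≥ (0 : ℝ), Ψ t ≤ E 0 := by
  have hderiv : ∀ t ≥ (0 : ℝ), HasDerivAt E (-(eω t ⬝ᵥ Kω *ᵥ eω t)) t := fun t ht =>
    hE ▸ hasDerivAt_kinetic_add_potential (isHermitian_iff_isSymm.mp hJ.isHermitian)
      hJ.det_pos.ne'.isUnit (hΨ t ht) (heω t ht)
  have hdissipation : ∀ t, -(eω t ⬝ᵥ Kω *ᵥ eω t) ≤ 0 := fun t =>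
    neg_nonpos.mpr (hKω.posSemidef.dotProduct_mulVec_nonneg _)
  have hanti : AntitoneOn E (Set.Ici 0) :=
    antitoneOn_of_hasDerivAt_nonpos (convex_Ici 0) hderiv fun t _ => hdissipation t
  refine ⟨fun t ht => ⟨hderiv t ht, hdissipation t⟩, hanti, fun t ht => ?_⟩
  have hΨ_le_E : Ψ t ≤ E t := by
    have hkinetic := hJ.posSemidef.dotProduct_mulVec_nonneg (eω t)
    rw [star_trivial] at hkinetic
    rw [hE]
    linarith
  exact hΨ_le_E.trans (hanti Set.self_mem_Ici ht ht)
end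

section
/- Let K_p = diag(k_{p1},k_{p2},k_{p3}) and K_v = diag(k_{v1},k_{v2},k_{v3}) be diagonal 3×3 matrices with positive entries, m > 0, and let c1 satisfy 0 < c1 < min_{i=1,2,3} (4·m·k_{pi}·k_{vi})/(k_{vi}² + 4·m·k_{pi}). Then the 6×6 block matrix W1 = (1/(2m))·[[2·c1·K_p, c1·K_v],[c1·K_v, 2m·(K_v − c1·I₃)]] is symmetric positive definite. -/
/-!
Since `K_p` and `K_v` are diagonal, the quadratic form of `W1` splits into three binary forms
`2 c1 k_p x² + 2 c1 k_v x y + 2m (k_v − c1) y²` in the coordinate pairs `(x_i, y_i)`. The bound on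
`c1` says exactly that each of them has negative discriminant; with its positive leading
coefficient, each binary form is then positive definite, and so is their sum.
-/

open Matrix

section BinaryForm

variable {a b c : ℝ} (ha : 0 < a) (hdisc : b ^ 2 < a * c)
include ha hdisc

-- Both proofs complete the square: `a (a u² + 2 b u v + c v²) = (a u + b v)² + (a c - b²) v²`.
lemma binaryForm_nonneg (u v : ℝ) : 0 ≤ a * u ^ 2 + 2 * b * u * v + c * v ^ 2 := by
  nlinarith [sq_nonneg (a * u + b * v), sq_nonneg v]

lemma binaryForm_pos {u v : ℝ} (huv : u ≠ 0 ∨ v ≠ 0) :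
    0 < a * u ^ 2 + 2 * b * u * v + c * v ^ 2 := by
  rcases eq_or_ne v 0 with rfl | hv
  · have hu : 0 < u ^ 2 := sq_pos_iff.2 (huv.resolve_right (not_not.2 rfl))
    simpa using mul_pos ha hu
  · nlinarith [sq_nonneg (a * u + b * v), sq_pos_iff.2 hv]

end BinaryForm

lemma dotProduct_fromBlocks_diagonal_mulVec {n : Type*} [Fintype n] [DecidableEq n]
    (a b c : n → ℝ) (x : n ⊕ n → ℝ) :
    x ⬝ᵥ fromBlocks (diagonal a) (diagonal b) (diagonal b) (diagonal c) *ᵥ x =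
      ∑ i, (a i * x (.inl i) ^ 2 + 2 * b i * x (.inl i) * x (.inr i) + c i * x (.inr i) ^ 2) := by
  rw [← Sum.elim_comp_inl_inr x, fromBlocks_mulVec]
  simp only [dotProduct, Fintype.sum_sum_type, mulVec_diagonal, Sum.elim_inl, Sum.elim_inr,
    Pi.add_apply, Function.comp_apply, ← Finset.sum_add_distrib]
  exact Finset.sum_congr rfl fun i _ => by ring

theorem posDef_fromBlocks_diagonal {n : Type*} [Fintype n] [DecidableEq n] {a b c : n → ℝ}
    (ha : ∀ i, 0 < a i) (hdisc : ∀ i, b i ^ 2 < a i * c i) :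
    (fromBlocks (diagonal a) (diagonal b) (diagonal b) (diagonal c)).PosDef := by
  refine posDef_iff_dotProduct_mulVec.2 ⟨IsHermitian.fromBlocks (by simp) (by simp) (by simp),
    fun x hx => ?_⟩
  rw [star_trivial, dotProduct_fromBlocks_diagonal_mulVec]
  obtain ⟨j | j, hj⟩ := Function.ne_iff.1 hx
  all_goals
    exact Finset.sum_pos' (fun i _ => binaryForm_nonneg (ha i) (hdisc i) _ _)
      ⟨j, Finset.mem_univ j, binaryForm_pos (ha j) (hdisc j) (by simp_all)⟩

lemma sq_lt_mul_of_lt_div {m kp kv c : ℝ} (hm : 0 < m) (hkp : 0 < kp) (hc : 0 < c)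
    (h : c < 4 * m * kp * kv / (kv ^ 2 + 4 * m * kp)) :
    (c * kv) ^ 2 < 2 * c * kp * (2 * m * (kv - c)) := by
  have hden : 0 < kv ^ 2 + 4 * m * kp := by positivity
  have h' := mul_lt_mul_of_pos_left ((lt_div_iff₀ hden).1 h) hc
  nlinarith

theorem stmt13_general (kp kv : Fin 3 → ℝ) (hkp : ∀ i, 0 < kp i)
    (Kp Kv : Matrix (Fin 3) (Fin 3) ℝ)
    (hKp : Kp = Matrix.diagonal kp) (hKv : Kv = Matrix.diagonal kv)
    (m c1 : ℝ) (hm : 0 < m)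
    (hc1pos : 0 < c1)
    (hc1lt : c1 < ⨅ i, (4 * m * kp i * kv i) / ((kv i) ^ 2 + 4 * m * kp i))
    (W1 : Matrix (Fin 3 ⊕ Fin 3) (Fin 3 ⊕ Fin 3) ℝ)
    (hW1 : W1 = (1 / (2 * m) : ℝ) •
      Matrix.fromBlocks ((2 * c1 : ℝ) • Kp) (c1 • Kv) (c1 • Kv)
        ((2 * m : ℝ) • (Kv - c1 • (1 : Matrix (Fin 3) (Fin 3) ℝ)))) :
    W1.IsSymm ∧ W1.PosDef := by
  have hW : W1 = (1 / (2 * m) : ℝ) • fromBlocks (diagonal fun i => 2 * c1 * kp i)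
      (diagonal fun i => c1 * kv i) (diagonal fun i => c1 * kv i)
      (diagonal fun i => 2 * m * (kv i - c1)) := by
    subst hW1 hKp hKv
    simp only [smul_one_eq_diagonal, ← diagonal_smul, diagonal_sub]
    rfl
  have hdisc (i : Fin 3) : (c1 * kv i) ^ 2 < 2 * c1 * kp i * (2 * m * (kv i - c1)) :=
    sq_lt_mul_of_lt_div hm (hkp i) hc1pos
      (hc1lt.trans_le (ciInf_le (Finite.bddBelow_range _) i))
  have hblocks := posDef_fromBlocks_diagonal (fun i => mul_pos (by positivity) (hkp i)) hdisc
  have hW1pos : W1.PosDef := hW ▸ hblocks.smul (by positivity)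
  exact ⟨isHermitian_iff_isSymm.1 hW1pos.isHermitian, hW1pos⟩

theorem stmt13 (kp kv : Fin 3 → ℝ) (hkp : ∀ i, 0 < kp i) (hkv : ∀ i, 0 < kv i)
    (Kp Kv : Matrix (Fin 3) (Fin 3) ℝ)
    (hKp : Kp = Matrix.diagonal kp) (hKv : Kv = Matrix.diagonal kv)
    (m c1 : ℝ) (hm : 0 < m)
    (hc1pos : 0 < c1)
    (hc1lt : c1 < ⨅ i, (4 * m * kp i * kv i) / ((kv i) ^ 2 + 4 * m * kp i))
    (W1 : Matrix (Fin 3 ⊕ Fin 3) (Fin 3 ⊕ Fin 3) ℝ)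
    (hW1 : W1 = (1 / (2 * m) : ℝ) •
      Matrix.fromBlocks ((2 * c1 : ℝ) • Kp) (c1 • Kv) (c1 • Kv)
        ((2 * m : ℝ) • (Kv - c1 • (1 : Matrix (Fin 3) (Fin 3) ℝ)))) :
    W1.IsSymm ∧ W1.PosDef :=
  stmt13_general kp kv hkp Kp Kv hKp hKv m c1 hm hc1pos hc1lt W1 hW1
end
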